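/- arXiv:2305.05506 — 3 statements merged into one kernel-verified Lean document; each statement's English description precedes it below -/
import Mathlib

section
/- For every ℓ ∈ {0,…,n} and every σ ∈ {0,1}^m, the forward metric defined by the forward recursion satisfies α_ℓ(σ) = Σ_{(d_1,…,d_ℓ)∈{0,1}^ℓ : ⋁_{i=1}^{ℓ}(d_i ∧ a_i) = σ} Π_{i=1}^{ℓ} π(d_i), i.e., α_ℓ(σ) is the total prior probability of all length-ℓ prefixes of defective vectors whose partial syndrome at depth ℓ equals σ. In particular, α_n(σ) = Pr(s(D) = σ), the probability that the syndrome of an i.i.d. Bernoulli(δ) defective vector D equals σ. -/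
/-- The prior `π` on `{0,1}`: `π(1) = δ`, `π(0) = 1 − δ`. -/
noncomputable def fedgtPrior (δ : ℝ) (b : Bool) : ℝ := if b then δ else 1 - δ

/-- Forward metrics of the BCJR algorithm on the trellis with `m` tests, whose columns
(`a ℓ` being the column used on the trellis section from depth `ℓ` to depth `ℓ+1`) are
given by `a : ℕ → Fin m → Bool`: `α₀(σ) = 1` iff `σ` is the all-zero state, and
`α_{ℓ+1}(σ) = ∑_{σ'} ∑_{b : σ' ∨ (b ∧ aₗ) = σ} α_ℓ(σ') π(b)`. -/
noncomputable def fedgtAlpha (m : ℕ) (a : ℕ → Fin m → Bool) (δ : ℝ) :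
    ℕ → (Fin m → Bool) → ℝ
  | 0 => fun σ => if σ = fun _ => false then 1 else 0
  | ℓ + 1 => fun σ => ∑ σ' : Fin m → Bool, ∑ b : Bool,
      if (fun i => σ' i || (b && a ℓ i)) = σ
      then fedgtAlpha m a δ ℓ σ' * fedgtPrior δ b else 0

lemma fedgt_sup_castSucc {n : ℕ} (f : Fin (n + 1) → Bool) :
    Finset.univ.sup f = (Finset.univ.sup fun i : Fin n => f i.castSucc) ⊔ f (Fin.last n) := by
  have h : (Finset.univ : Finset (Fin (n + 1)))
      = insert (Fin.last n) (Finset.image Fin.castSucc Finset.univ) := by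
    ext x
    simp [Fin.eq_castSucc_or_eq_last x, or_comm]
  rw [h, Finset.sup_insert, Finset.sup_image, sup_comm]
  rfl

lemma fedgt_sup_filter {γ : Type*} (s : Finset γ) (c d : γ → Bool) :
    (s.filter fun j => c j = true).sup d = s.sup fun k => d k && c k := by
  apply le_antisymm
  · refine Finset.sup_le fun j hj => ?_
    rw [Finset.mem_filter] at hj
    have := Finset.le_sup (f := fun k => d k && c k) hj.1
    simpa [hj.2] using this
  · refine Finset.sup_le fun k hk => ?_
    by_cases h : c k = true
    · have hm : k ∈ s.filter fun j => c j = true := Finset.mem_filter.2 ⟨hk, h⟩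
      have := Finset.le_sup (f := d) hm
      simpa [h] using this
    · simp only [Bool.not_eq_true] at h
      simp [h]

lemma fedgt_aux (m : ℕ) (a : ℕ → Fin m → Bool) (δ : ℝ) :
    ∀ ℓ : ℕ, ∀ σ : Fin m → Bool,
      fedgtAlpha m a δ ℓ σ
        = ∑ d : Fin ℓ → Bool,
            if (fun i => Finset.univ.sup fun k : Fin ℓ => d k && a (k : ℕ) i) = σ
            then ∏ k : Fin ℓ, fedgtPrior δ (d k) else 0 := by
  intro ℓ
  induction ℓ with
  | zero =>
    intro σ
    simp [fedgtAlpha, eq_comm]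
  | succ ℓ ih =>
    intro σ
    rw [show fedgtAlpha m a δ (ℓ + 1) σ = ∑ σ' : Fin m → Bool, ∑ b : Bool,
        if (fun i => σ' i || (b && a ℓ i)) = σ
        then fedgtAlpha m a δ ℓ σ' * fedgtPrior δ b else 0 from rfl]
    have lhs_eq : ∀ σ' : Fin m → Bool, ∀ b : Bool,
        (if (fun i => σ' i || (b && a ℓ i)) = σ
          then fedgtAlpha m a δ ℓ σ' * fedgtPrior δ b else 0)
        = ∑ d' : Fin ℓ → Bool,
            if ((fun i => Finset.univ.sup fun k : Fin ℓ => d' k && a (k : ℕ) i) = σ'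
                ∧ (fun i => σ' i || (b && a ℓ i)) = σ)
            then (∏ k : Fin ℓ, fedgtPrior δ (d' k)) * fedgtPrior δ b else 0 := by
      intro σ' b
      rw [ih σ', Finset.sum_mul]
      by_cases h : (fun i => σ' i || (b && a ℓ i)) = σ
      · simp only [h, if_true, and_true, ite_mul, zero_mul]
      · simp [h]
    simp only [lhs_eq]
    rw [Finset.sum_comm]
    have step : ∀ b : Bool,
        (∑ σ' : Fin m → Bool, ∑ d' : Fin ℓ → Bool,
          if ((fun i => Finset.univ.sup fun k : Fin ℓ => d' k && a (k : ℕ) i) = σ'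
              ∧ (fun i => σ' i || (b && a ℓ i)) = σ)
          then (∏ k : Fin ℓ, fedgtPrior δ (d' k)) * fedgtPrior δ b else 0)
        = ∑ d' : Fin ℓ → Bool,
          if (fun i => (Finset.univ.sup fun k : Fin ℓ => d' k && a (k : ℕ) i) || (b && a ℓ i)) = σ
          then (∏ k : Fin ℓ, fedgtPrior δ (d' k)) * fedgtPrior δ b else 0 := by
      intro b
      rw [Finset.sum_comm]
      refine Finset.sum_congr rfl fun d' _ => ?_
      simp only [ite_and]
      rw [Finset.sum_ite_eq (Finset.univ : Finset (Fin m → Bool))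
        (fun i => Finset.univ.sup fun k : Fin ℓ => d' k && a (k : ℕ) i)
        (fun σ' => if (fun i => σ' i || (b && a ℓ i)) = σ
          then (∏ k : Fin ℓ, fedgtPrior δ (d' k)) * fedgtPrior δ b else 0)]
      simp
    simp only [step]
    rw [← Equiv.sum_comp (Fin.snocEquiv fun _ : Fin (ℓ + 1) => Bool)
      (fun d : Fin (ℓ + 1) → Bool =>
        if (fun i => Finset.univ.sup fun k : Fin (ℓ + 1) => d k && a (k : ℕ) i) = σ
        then ∏ k : Fin (ℓ + 1), fedgtPrior δ (d k) else 0), Fintype.sum_prod_type]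
    refine Finset.sum_congr rfl fun b _ => Finset.sum_congr rfl fun d' _ => ?_
    have hcond : (fun i => Finset.univ.sup fun k : Fin (ℓ + 1) =>
          (Fin.snocEquiv fun _ => Bool) (b, d') k && a (k : ℕ) i)
        = fun i => (Finset.univ.sup fun k : Fin ℓ => d' k && a (k : ℕ) i) || (b && a ℓ i) := by
      funext i
      rw [fedgt_sup_castSucc]
      simp [Fin.snocEquiv]
    have hprod : (∏ k : Fin (ℓ + 1), fedgtPrior δ ((Fin.snocEquiv fun _ => Bool) (b, d') k))
        = (∏ k : Fin ℓ, fedgtPrior δ (d' k)) * fedgtPrior δ b := by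
      rw [Fin.prod_univ_castSucc]
      simp [Fin.snocEquiv]
    rw [hcond, hprod]

/-- **Forward metric = total prior probability of compatible prefixes.**
For every `ℓ ≤ n` and state `σ`, `α_ℓ(σ)` is the total prior probability of all length-`ℓ`
prefixes `(d₁,…,d_ℓ)` whose partial syndrome at depth `ℓ` equals `σ`; in particular,
`αₙ(σ) = Pr(s(D) = σ)` for an i.i.d. Bernoulli(δ) defective vector `D`, where
`s(d)ᵢ = ⋁_{j : aᵢⱼ = 1} dⱼ` is the syndrome. -/
theorem fedgt_alpha_eq (m n : ℕ) (a : ℕ → Fin m → Bool) (δ : ℝ)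
    (hδ0 : 0 < δ) (hδ1 : δ < 1) :
    (∀ ℓ : ℕ, ℓ ≤ n → ∀ σ : Fin m → Bool,
      fedgtAlpha m a δ ℓ σ
        = ∑ d : Fin ℓ → Bool,
            if (fun i => Finset.univ.sup fun k : Fin ℓ => d k && a (k : ℕ) i) = σ
            then ∏ k : Fin ℓ, fedgtPrior δ (d k) else 0) ∧
    (∀ σ : Fin m → Bool,
      fedgtAlpha m a δ n σ
        = ∑ d : Fin n → Bool,
            if (fun i =>
                 (Finset.univ.filter fun j : Fin n => a (j : ℕ) i = true).sup fun j => d j)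
               = σ
            then ∏ j : Fin n, fedgtPrior δ (d j) else 0) := by
  constructor
  · intro ℓ _ σ
    exact fedgt_aux m a δ ℓ σ
  · intro σ
    rw [fedgt_aux m a δ n σ]
    refine Finset.sum_congr rfl fun d _ => ?_
    have : (fun i =>
          (Finset.univ.filter fun j : Fin n => a (j : ℕ) i = true).sup fun j => d j)
        = fun i => Finset.univ.sup fun k : Fin n => d k && a (k : ℕ) i := by
      funext i
      exact fedgt_sup_filter (Finset.univ : Finset (Fin n)) (fun j => a (j : ℕ) i) d
    rw [this]
end

section
/- For every ℓ ∈ [n] and every b ∈ {0,1}, the joint probability that client ℓ has defectivity status b and the test-result vector equals t is given by the forward–backward sum over the trellis edges labeled b: Pr(D_ℓ = b, T = t) = Σ_{(σ',σ)∈E_ℓ^{(b)}} α_{ℓ−1}(σ') γ_ℓ(σ',σ) β_ℓ(σ) = π(b) · Σ_{σ'∈{0,1}^m} α_{ℓ−1}(σ') β_ℓ(σ' ∨ (b ∧ a_ℓ)). -/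
/-- Backward metrics of the BCJR algorithm, computed backwards from depth `n`:
`fedgtBetaRev k` is the backward metric at depth `n − k`, starting from `β_n = Q(t|·)`. -/
noncomputable def fedgtBetaRev (m n : ℕ) (a : ℕ → Fin m → Bool) (δ : ℝ)
    (Q : (Fin m → Bool) → ℝ) : ℕ → (Fin m → Bool) → ℝ
  | 0 => Q
  | k + 1 => fun σ' => ∑ σ : Fin m → Bool, ∑ b : Bool,
      if (fun i => σ' i || (b && a (n - (k + 1)) i)) = σ
      then fedgtBetaRev m n a δ Q k σ * fedgtPrior δ b else 0

/-- Backward metric at depth `ℓ`. -/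
noncomputable def fedgtBeta (m n : ℕ) (a : ℕ → Fin m → Bool) (δ : ℝ)
    (Q : (Fin m → Bool) → ℝ) (ℓ : ℕ) : (Fin m → Bool) → ℝ :=
  fedgtBetaRev m n a δ Q (n - ℓ)


lemma fb_sum_snoc (p : ℕ) (f : (Fin (p+1) → Bool) → ℝ) :
    ∑ d : Fin (p+1) → Bool, f d = ∑ d : Fin p → Bool, ∑ b : Bool, f (Fin.snoc d b) := by
  rw [show (∑ d : Fin (p+1) → Bool, f d)
      = ∑ x : Bool × (Fin p → Bool), f (Fin.snoc x.2 x.1) from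
    (Fintype.sum_equiv (Fin.snocEquiv (fun _ => Bool)) _ _ (fun x => by
      simp [Fin.snocEquiv])).symm]
  rw [Fintype.sum_prod_type]
  exact Finset.sum_comm

noncomputable def fbSynd (m p : ℕ) (a : ℕ → Fin m → Bool) (d : Fin p → Bool) : Fin m → Bool :=
  fun i => (Finset.univ.filter fun j : Fin p => a (j : ℕ) i = true).sup fun j => d j

lemma fbSynd_sup (m p : ℕ) (a : ℕ → Fin m → Bool) (d : Fin p → Bool) (i : Fin m) :
    fbSynd m p a d i = Finset.univ.sup (fun j : Fin p => a (j : ℕ) i && d j) := by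
  have : (fun j : Fin p => a (j : ℕ) i && d j)
      = fun j : Fin p => if a (j : ℕ) i = true then d j else ⊥ := by
    funext j; cases a (j : ℕ) i <;> simp
  rw [this, Finset.sup_ite]
  simp [fbSynd]

lemma fbSynd_snoc (m p : ℕ) (a : ℕ → Fin m → Bool) (d : Fin p → Bool) (b : Bool) :
    fbSynd m (p+1) a (Fin.snoc d b)
      = fun i => fbSynd m p a d i || (b && a p i) := by
  funext i
  rw [fbSynd_sup, Fin.univ_castSuccEmb, Finset.sup_cons, Finset.sup_map]
  have h2 : ((fun j : Fin (p+1) => a (↑j) i && (Fin.snoc (α := fun _ => Bool) d b j)) ∘ ⇑Fin.castSuccEmb)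
      = fun x : Fin p => (a (↑x) i && d x) := by
    funext x
    show (a (↑(Fin.castSucc x)) i && Fin.snoc (α := fun _ => Bool) d b (Fin.castSucc x)) = (a (↑x) i && d x)
    rw [Fin.snoc_castSucc, Fin.coe_castSucc]
  rw [h2, ← fbSynd_sup]
  show (a (↑(Fin.last p)) i && (Fin.snoc (α := fun _ => Bool) d b (Fin.last p))) ⊔ fbSynd m p a d i = _
  rw [Fin.snoc_last, Fin.val_last]
  cases a p i <;> cases b <;> cases fbSynd m p a d i <;> rfl





lemma fb_prod_snoc (p : ℕ) (δ : ℝ) (d : Fin p → Bool) (b : Bool) :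
    (∏ j : Fin (p+1), fedgtPrior δ (Fin.snoc (α := fun _ => Bool) d b j))
      = (∏ j : Fin p, fedgtPrior δ (d j)) * fedgtPrior δ b := by
  rw [Fin.prod_univ_castSucc]
  simp [Fin.snoc_castSucc, Fin.snoc_last]

lemma fb_alpha_eq (m : ℕ) (a : ℕ → Fin m → Bool) (δ : ℝ) :
    ∀ (ℓ : ℕ) (σ : Fin m → Bool), fedgtAlpha m a δ ℓ σ
      = ∑ d : Fin ℓ → Bool, if fbSynd m ℓ a d = σ then ∏ j, fedgtPrior δ (d j) else 0 := by
  intro ℓ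
  induction ℓ with
  | zero =>
    intro σ
    rw [Fintype.sum_subsingleton _ (fun j : Fin 0 => false)]
    have h0 : fbSynd m 0 a (fun _ => false) = fun _ => false := by
      funext i; simp [fbSynd]
    simp only [h0, fedgtAlpha]
    rw [Finset.univ_eq_empty, Finset.prod_empty]
    by_cases h : (fun _ => false : Fin m → Bool) = σ
    · rw [if_pos h, if_pos h.symm]
    · rw [if_neg h, if_neg (fun hh => h hh.symm)]
  | succ ℓ ih =>
    intro σ
    show (∑ σ' : Fin m → Bool, ∑ b : Bool,
        if (fun i => σ' i || (b && a ℓ i)) = σ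
        then fedgtAlpha m a δ ℓ σ' * fedgtPrior δ b else 0) = _
    have step1 : ∀ σ' : Fin m → Bool, ∀ b : Bool,
        (if (fun i => σ' i || (b && a ℓ i)) = σ
          then fedgtAlpha m a δ ℓ σ' * fedgtPrior δ b else 0)
        = ∑ d : Fin ℓ → Bool, if fbSynd m ℓ a d = σ' then
            (if (fun i => σ' i || (b && a ℓ i)) = σ
              then (∏ j, fedgtPrior δ (d j)) * fedgtPrior δ b else 0) else 0 := by
      intro σ' b
      rw [ih σ', Finset.sum_mul]
      split_ifs with h
      · apply Finset.sum_congr rfl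
        intro d _
        split_ifs with h2 <;> simp
      · rw [Finset.sum_eq_zero]
        intro d _
        split_ifs <;> simp
    simp only [step1]
    rw [Finset.sum_comm]
    rw [Finset.sum_congr rfl (fun b _ => Finset.sum_comm (γ := Fin m → Bool))]
    have step2 : ∀ (b : Bool) (d : Fin ℓ → Bool),
        (∑ σ' : Fin m → Bool, if fbSynd m ℓ a d = σ' then
            (if (fun i => σ' i || (b && a ℓ i)) = σ
              then (∏ j, fedgtPrior δ (d j)) * fedgtPrior δ b else 0) else 0)
        = (if (fun i => fbSynd m ℓ a d i || (b && a ℓ i)) = σ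
            then (∏ j, fedgtPrior δ (d j)) * fedgtPrior δ b else 0) := by
      intro b d
      rw [Finset.sum_ite_eq Finset.univ (fbSynd m ℓ a d)
        (fun σ' => if (fun i => σ' i || (b && a ℓ i)) = σ
          then (∏ j, fedgtPrior δ (d j)) * fedgtPrior δ b else 0),
        if_pos (Finset.mem_univ _)]
    simp only [step2]
    rw [fb_sum_snoc ℓ (fun d => if fbSynd m (ℓ+1) a d = σ then ∏ j, fedgtPrior δ (d j) else 0)]
    rw [Finset.sum_comm]
    apply Finset.sum_congr rfl; intro b _
    apply Finset.sum_congr rfl; intro d _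
    rw [fbSynd_snoc, fb_prod_snoc]





lemma fb_beta_rec (m n : ℕ) (a : ℕ → Fin m → Bool) (δ : ℝ) (Q : (Fin m → Bool) → ℝ)
    (p : ℕ) (hp : p < n) (σ' : Fin m → Bool) :
    fedgtBeta m n a δ Q p σ'
      = ∑ b : Bool, fedgtPrior δ b *
          fedgtBeta m n a δ Q (p+1) (fun i => σ' i || (b && a p i)) := by
  have hk : n - p = (n - (p+1)) + 1 := by omega
  show fedgtBetaRev m n a δ Q (n - p) σ' = _
  rw [hk]
  show (∑ σ : Fin m → Bool, ∑ b : Bool,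
      if (fun i => σ' i || (b && a (n - ((n - (p+1)) + 1)) i)) = σ
      then fedgtBetaRev m n a δ Q (n - (p+1)) σ * fedgtPrior δ b else 0) = _
  have ha : n - ((n - (p+1)) + 1) = p := by omega
  rw [ha, Finset.sum_comm]
  apply Finset.sum_congr rfl; intro b _
  rw [Finset.sum_ite_eq Finset.univ _
    (fun σ => fedgtBetaRev m n a δ Q (n - (p+1)) σ * fedgtPrior δ b),
    if_pos (Finset.mem_univ _)]
  exact mul_comm _ _

lemma fb_T_step (m n : ℕ) (a : ℕ → Fin m → Bool) (δ : ℝ) (Q : (Fin m → Bool) → ℝ)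
    (L : ℕ) (b : Bool) (p : ℕ) (h1 : L < p) (h2 : p < n) :
    (∑ d : Fin p → Bool, if d ⟨L, h1⟩ = b then
        (∏ j, fedgtPrior δ (d j)) * fedgtBeta m n a δ Q p (fbSynd m p a d) else 0)
    = (∑ d : Fin (p+1) → Bool, if d ⟨L, Nat.lt_succ_of_lt h1⟩ = b then
        (∏ j, fedgtPrior δ (d j)) * fedgtBeta m n a δ Q (p+1) (fbSynd m (p+1) a d) else 0) := by
  rw [fb_sum_snoc p (fun d => if d ⟨L, Nat.lt_succ_of_lt h1⟩ = b then
      (∏ j, fedgtPrior δ (d j)) * fedgtBeta m n a δ Q (p+1) (fbSynd m (p+1) a d) else 0)]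
  apply Finset.sum_congr rfl; intro d _
  have hidx : ∀ b' : Bool,
      Fin.snoc (α := fun _ => Bool) d b' ⟨L, Nat.lt_succ_of_lt h1⟩ = d ⟨L, h1⟩ := by
    intro b'
    have : (⟨L, Nat.lt_succ_of_lt h1⟩ : Fin (p+1)) = Fin.castSucc ⟨L, h1⟩ := rfl
    rw [this, Fin.snoc_castSucc]
  simp only [hidx, fbSynd_snoc, fb_prod_snoc]
  rw [fb_beta_rec m n a δ Q p h2 (fbSynd m p a d)]
  split_ifs with h
  · rw [Finset.mul_sum]
    apply Finset.sum_congr rfl; intro b' _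
    ring
  · exact (Finset.sum_eq_zero (fun b' _ => rfl)).symm

/-- **Forward–backward sum over the edges labeled `b` = joint probability.**
For every client `ℓ` (zero-indexed, so `α_{ℓ-1}` is `fedgtAlpha … ℓ`, `β_ℓ` is
`fedgtBeta … (ℓ+1)` and the relevant column is `a ℓ`) and every defectivity status `b`,
`Pr(D_ℓ = b, T = t) = ∑_{(σ',σ) ∈ E_ℓ^{(b)}} α_{ℓ−1}(σ') γ_ℓ(σ',σ) β_ℓ(σ)
 = π(b) ∑_{σ'} α_{ℓ−1}(σ') β_ℓ(σ' ∨ (b ∧ a_ℓ))`, where the joint model is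
`Pr(D = d, T = t) = (∏ᵢ π(dᵢ)) Q(t|s(d))` with syndrome `s(d)ᵢ = ⋁_{j : aᵢⱼ=1} dⱼ`. -/
theorem fedgt_forward_backward_joint (m n : ℕ) (a : ℕ → Fin m → Bool) (δ : ℝ)
    (hδ0 : 0 < δ) (hδ1 : δ < 1)
    (𝒯 : Type*) [Fintype 𝒯] (Qk : 𝒯 → (Fin m → Bool) → ℝ)
    (hQnn : ∀ t σ, 0 ≤ Qk t σ) (hQsum : ∀ σ, ∑ t, Qk t σ = 1) (t : 𝒯)
    (ℓ : Fin n) (b : Bool) :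
    (∑ d : Fin n → Bool,
        if d ℓ = b then
          (∏ j : Fin n, fedgtPrior δ (d j)) *
            Qk t (fun i =>
              (Finset.univ.filter fun j : Fin n => a (j : ℕ) i = true).sup fun j => d j)
        else 0)
      = (∑ σ' : Fin m → Bool, ∑ σ : Fin m → Bool,
          if (fun i => σ' i || (b && a (ℓ : ℕ) i)) = σ
          then fedgtAlpha m a δ (ℓ : ℕ) σ' * fedgtPrior δ b *
                 fedgtBeta m n a δ (Qk t) ((ℓ : ℕ) + 1) σ
          else 0) ∧
    (∑ d : Fin n → Bool,
        if d ℓ = b then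
          (∏ j : Fin n, fedgtPrior δ (d j)) *
            Qk t (fun i =>
              (Finset.univ.filter fun j : Fin n => a (j : ℕ) i = true).sup fun j => d j)
        else 0)
      = fedgtPrior δ b *
          ∑ σ' : Fin m → Bool,
            fedgtAlpha m a δ (ℓ : ℕ) σ' *
              fedgtBeta m n a δ (Qk t) ((ℓ : ℕ) + 1)
                (fun i => σ' i || (b && a (ℓ : ℕ) i)) := by
  classical
  set L : ℕ := (ℓ : ℕ) with hLdef
  have hL : L < n := ℓ.isLt
  have hbeta_n : ∀ σ, fedgtBeta m n a δ (Qk t) n σ = Qk t σ := by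
    intro σ
    show fedgtBetaRev m n a δ (Qk t) (n - n) σ = Qk t σ
    rw [Nat.sub_self]
    simp [fedgtBetaRev]
  -- chain lemma
  have chain : ∀ q : ℕ, ∀ p : ℕ, ∀ h1 : L < p, p + q = n →
      (∑ d : Fin p → Bool, if d ⟨L, h1⟩ = b then
          (∏ j, fedgtPrior δ (d j)) *
            fedgtBeta m n a δ (Qk t) p (fbSynd m p a d) else 0)
      = (∑ d : Fin n → Bool, if d ⟨L, hL⟩ = b then
          (∏ j, fedgtPrior δ (d j)) *
            fedgtBeta m n a δ (Qk t) n (fbSynd m n a d) else 0) := by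
    intro q
    induction q with
    | zero =>
      intro p h1 hpq
      have hpn : p = n := by omega
      subst hpn
      rfl
    | succ q ih =>
      intro p h1 hpq
      rw [fb_T_step m n a δ (Qk t) L b p h1 (by omega)]
      exact ih (p+1) (Nat.lt_succ_of_lt h1) (by omega)
  -- the LHS equals T n
  have hTn : (∑ d : Fin n → Bool,
        if d ℓ = b then
          (∏ j : Fin n, fedgtPrior δ (d j)) *
            Qk t (fun i =>
              (Finset.univ.filter fun j : Fin n => a (j : ℕ) i = true).sup fun j => d j)
        else 0)
      = (∑ d : Fin n → Bool, if d ⟨L, hL⟩ = b then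
          (∏ j, fedgtPrior δ (d j)) *
            fedgtBeta m n a δ (Qk t) n (fbSynd m n a d) else 0) := by
    apply Finset.sum_congr rfl; intro d _
    rw [hbeta_n (fbSynd m n a d)]
    rfl
  -- LHS = T (L+1)
  have hTl : (∑ d : Fin n → Bool,
        if d ℓ = b then
          (∏ j : Fin n, fedgtPrior δ (d j)) *
            Qk t (fun i =>
              (Finset.univ.filter fun j : Fin n => a (j : ℕ) i = true).sup fun j => d j)
        else 0)
      = (∑ d : Fin (L+1) → Bool, if d ⟨L, Nat.lt_succ_self L⟩ = b then
          (∏ j, fedgtPrior δ (d j)) *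
            fedgtBeta m n a δ (Qk t) (L+1) (fbSynd m (L+1) a d) else 0) := by
    rw [hTn, ← chain (n - (L+1)) (L+1) (Nat.lt_succ_self L) (by omega)]
  -- compute T (L+1)
  have hmain : (∑ d : Fin (L+1) → Bool, if d ⟨L, Nat.lt_succ_self L⟩ = b then
          (∏ j, fedgtPrior δ (d j)) *
            fedgtBeta m n a δ (Qk t) (L+1) (fbSynd m (L+1) a d) else 0)
      = fedgtPrior δ b *
          ∑ σ' : Fin m → Bool,
            fedgtAlpha m a δ L σ' *
              fedgtBeta m n a δ (Qk t) (L+1)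
                (fun i => σ' i || (b && a L i)) := by
    rw [fb_sum_snoc L (fun d => if d ⟨L, Nat.lt_succ_self L⟩ = b then
        (∏ j, fedgtPrior δ (d j)) *
          fedgtBeta m n a δ (Qk t) (L+1) (fbSynd m (L+1) a d) else 0)]
    have hidx : ∀ (d : Fin L → Bool) (b' : Bool),
        Fin.snoc (α := fun _ => Bool) d b' ⟨L, Nat.lt_succ_self L⟩ = b' := by
      intro d b'
      have : (⟨L, Nat.lt_succ_self L⟩ : Fin (L+1)) = Fin.last L := rfl
      rw [this, Fin.snoc_last]
    simp only [hidx, fbSynd_snoc, fb_prod_snoc]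
    have hcol : ∀ d : Fin L → Bool,
        (∑ b' : Bool, if b' = b then
            ((∏ j, fedgtPrior δ (d j)) * fedgtPrior δ b') *
              fedgtBeta m n a δ (Qk t) (L+1)
                (fun i => fbSynd m L a d i || (b' && a L i)) else 0)
        = ((∏ j, fedgtPrior δ (d j)) * fedgtPrior δ b) *
            fedgtBeta m n a δ (Qk t) (L+1)
              (fun i => fbSynd m L a d i || (b && a L i)) := by
      intro d
      rw [Finset.sum_ite_eq' Finset.univ b
        (fun b' => ((∏ j, fedgtPrior δ (d j)) * fedgtPrior δ b') *
          fedgtBeta m n a δ (Qk t) (L+1)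
            (fun i => fbSynd m L a d i || (b' && a L i))),
        if_pos (Finset.mem_univ _)]
    rw [Finset.sum_congr rfl (fun d _ => hcol d)]
    -- now handle the RHS
    rw [Finset.mul_sum]
    have hterm : ∀ σ' : Fin m → Bool,
        fedgtPrior δ b * (fedgtAlpha m a δ L σ' *
            fedgtBeta m n a δ (Qk t) (L+1) (fun i => σ' i || (b && a L i)))
        = ∑ d : Fin L → Bool, if fbSynd m L a d = σ' then
            fedgtPrior δ b * ((∏ j, fedgtPrior δ (d j)) *
              fedgtBeta m n a δ (Qk t) (L+1) (fun i => σ' i || (b && a L i))) else 0 := by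
      intro σ'
      rw [fb_alpha_eq m a δ L σ', Finset.sum_mul, Finset.mul_sum]
      apply Finset.sum_congr rfl; intro d _
      split_ifs with h
      · ring
      · simp
    rw [Finset.sum_congr rfl (fun σ' _ => hterm σ'), Finset.sum_comm]
    apply Finset.sum_congr rfl; intro d _
    rw [Finset.sum_ite_eq Finset.univ (fbSynd m L a d)
      (fun σ' => fedgtPrior δ b * ((∏ j, fedgtPrior δ (d j)) *
        fedgtBeta m n a δ (Qk t) (L+1) (fun i => σ' i || (b && a L i)))),
      if_pos (Finset.mem_univ _)]
    ring
  have hsecond := hTl.trans hmain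
  constructor
  · rw [hsecond, Finset.mul_sum]
    symm
    apply Finset.sum_congr rfl; intro σ' _
    rw [Finset.sum_ite_eq Finset.univ (fun i => σ' i || (b && a L i))
      (fun σ => fedgtAlpha m a δ L σ' * fedgtPrior δ b *
        fedgtBeta m n a δ (Qk t) (L+1) σ),
      if_pos (Finset.mem_univ _)]
    ring
  · exact hsecond
end

section
/- (Neyman–Pearson lemma.) Let X be a finite set, let p_0 and p_1 be probability mass functions on X, let λ > 0, and let A_LRT = {x ∈ X : p_1(x) > λ p_0(x)} be the acceptance region of the likelihood ratio test. Then for every subset A ⊆ X with Σ_{x∈A} p_0(x) ≤ Σ_{x∈A_LRT} p_0(x), one has Σ_{x∈A} p_1(x) ≤ Σ_{x∈A_LRT} p_1(x). In other words, there is no test whose false-alarm probability does not exceed that of the likelihood ratio test and whose detection probability is strictly larger: the likelihood ratio test is the most powerful test at its own false-alarm level. -/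
/-!
Write `f = p₁ - λ p₀`. The LRT region is exactly `{f > 0}`, and summing `f` over `{f > 0}`
dominates its sum over any test `A`. Hence
`P_D(A) - λ P_FA(A) ≤ P_D(A_LRT) - λ P_FA(A_LRT)`, and since `λ ≥ 0` the hypothesis
`P_FA(A) ≤ P_FA(A_LRT)` leaves `P_D(A) ≤ P_D(A_LRT)`.
-/

open Finset

theorem Finset.sum_le_sum_filter_pos {ι M : Type*} [Fintype ι] [AddCommMonoid M] [LinearOrder M]
    [IsOrderedAddMonoid M] (f : ι → M) [DecidablePred fun i => 0 < f i] (s : Finset ι) :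
    ∑ i ∈ s, f i ≤ ∑ i with 0 < f i, f i :=
  calc ∑ i ∈ s, f i
      ≤ ∑ i ∈ s with 0 < f i, f i :=
        sum_le_sum_of_subset_of_nonpos' (filter_subset _ s) fun _ hi his =>
          not_lt.mp fun hpos => his (mem_filter.mpr ⟨hi, hpos⟩)
    _ ≤ ∑ i with 0 < f i, f i :=
        sum_le_sum_of_subset_of_nonneg (filter_subset_filter _ (subset_univ s))
          fun _ hi _ => (mem_filter.mp hi).2.le

theorem sum_sub_mul_le_sum_filter_mul_lt {X R : Type*} [Fintype X] [Ring R] [LinearOrder R]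
    [IsOrderedRing R] (p0 p1 : X → R) (lam : R) (A : Finset X) :
    ∑ x ∈ A, (p1 x - lam * p0 x) ≤ ∑ x with lam * p0 x < p1 x, (p1 x - lam * p0 x) := by
  simpa only [sub_pos] using sum_le_sum_filter_pos (fun x => p1 x - lam * p0 x) A

theorem neyman_pearson_general {X : Type*} [Fintype X] (p0 p1 : X → ℝ)
    (lam : ℝ) (hlam : 0 < lam)
    (A : Finset X)
    (hFA : ∑ x ∈ A, p0 x
      ≤ ∑ x ∈ Finset.univ.filter fun x => lam * p0 x < p1 x, p0 x) :
    ∑ x ∈ A, p1 x ≤ ∑ x ∈ Finset.univ.filter fun x => lam * p0 x < p1 x, p1 x := by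
  have lagrangian := sum_sub_mul_le_sum_filter_mul_lt p0 p1 lam A
  simp only [sum_sub_distrib, ← mul_sum] at lagrangian
  linarith [mul_le_mul_of_nonneg_left hFA hlam.le]

/-- **Neyman–Pearson lemma.** On a finite observation space `X` with probability mass
functions `p₀` (under `H₀`) and `p₁` (under `H₁`) and `λ > 0`, let
`A_LRT = {x : p₁(x) > λ p₀(x)}` be the acceptance region of the likelihood ratio test.
Then every test `A ⊆ X` whose false-alarm probability `∑_{x∈A} p₀(x)` does not exceed that
of `A_LRT` has detection probability `∑_{x∈A} p₁(x)` at most that of `A_LRT`: the LRT is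
the most powerful test at its own false-alarm level. -/
theorem neyman_pearson {X : Type*} [Fintype X] (p0 p1 : X → ℝ)
    (h0 : ∀ x, 0 ≤ p0 x) (h1 : ∀ x, 0 ≤ p1 x)
    (hs0 : ∑ x, p0 x = 1) (hs1 : ∑ x, p1 x = 1)
    (lam : ℝ) (hlam : 0 < lam)
    (A : Finset X)
    (hFA : ∑ x ∈ A, p0 x
      ≤ ∑ x ∈ Finset.univ.filter fun x => lam * p0 x < p1 x, p0 x) :
    ∑ x ∈ A, p1 x ≤ ∑ x ∈ Finset.univ.filter fun x => lam * p0 x < p1 x, p1 x :=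
  neyman_pearson_general p0 p1 lam hlam A hFA
end
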